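/- arXiv:1312.6053 — 3 statements merged into one kernel-verified Lean document; each statement's English description precedes it below -/
import Mathlib

section
/- Let M be an infinitesimally Kobayashi non-degenerate complex manifold and f : M → ℂ̂ meromorphic. If for every holomorphic map φ : 𝔻 → M the spherical derivative of f∘φ at 0 is bounded by a constant C independent of φ (i.e., |(f∘φ)'(0)|/(1+|f∘φ(0)|²) ≤ C), then f is normal: χ(f(z), f_*(z)(ξ)) ≤ 2C·k_M(z,ξ) for all z ∈ M, ξ ∈ T_z(M). -/
open Metric Set Filter

noncomputable section

/-- The unit disk in ℂ. -/
def unitDisk : Set ℂ := Metric.ball 0 1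

variable {E : Type*} [NormedAddCommGroup E] [NormedSpace ℂ E]

/-- An analytic disk in `M`: a holomorphic map from the unit disk into `M`. -/
def AnalyticDiskIn (M : Set E) (φ : ℂ → E) : Prop :=
  DifferentiableOn ℂ φ unitDisk ∧ Set.MapsTo φ unitDisk M

/-- The infinitesimal Kobayashi–Royden pseudometric. -/
def kobayashi (M : Set E) (z ξ : E) : ℝ :=
  sInf { r : ℝ | ∃ (φ : ℂ → E) (a : ℂ), AnalyticDiskIn M φ ∧ φ 0 = z ∧
    deriv φ 0 = a • ξ ∧ a ≠ 0 ∧ r = 1 / ‖a‖ }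

/-- The infinitesimal spherical metric `χ(w, ξ) = 2|ξ|/(1+|w|²)`. -/
def sphMetric (w ξ : ℂ) : ℝ := 2 * ‖ξ‖ / (1 + ‖w‖ ^ 2)

/-- `g` is a normal function on `M`. -/
def NormalOn (M : Set E) (g : E → ℂ) : Prop :=
  ∃ C : ℝ, ∀ z ∈ M, ∀ ξ : E, sphMetric (g z) (fderiv ℂ g z ξ) ≤ C * kobayashi M z ξ

/-- `f` is a Bloch function on `M`. -/
def BlochOn (M : Set E) (f : E → ℂ) : Prop :=
  ∃ C : ℝ, ∀ z ∈ M, ∀ ξ : E, ‖fderiv ℂ f z ξ‖ ≤ C * kobayashi M z ξ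

/-- `f` is semi-Bloch on `M`: `exp (λ f)` is normal for every `λ ∈ ℂ`. -/
def SemiBloch (M : Set E) (f : E → ℂ) : Prop :=
  ∀ lam : ℂ, NormalOn M (fun z => Complex.exp (lam * f z))

/-- `M` is infinitesimally Kobayashi non-degenerate. -/
def KobayashiNondegenerate (M : Set E) : Prop :=
  ∀ z ∈ M, ∀ ξ : E, ξ ≠ 0 → 0 < kobayashi M z ξ

/-- `D(w₀, r)` is a schlicht disk in the range of `f`. -/
def SchlichtRadius (M : Set E) (f : E → ℂ) (w₀ : ℂ) (r : ℝ) : Prop :=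
  ∃ h : ℂ → E, DifferentiableOn ℂ h unitDisk ∧ Set.MapsTo h unitDisk M ∧
    DifferentiableOn ℂ (f ∘ h) unitDisk ∧ Set.BijOn (f ∘ h) unitDisk (Metric.ball w₀ r)

/-- A (real-affine) line in the complex plane. -/
def IsLine (L : Set ℂ) : Prop :=
  ∃ a b : ℂ, b ≠ 0 ∧ L = {z : ℂ | ∃ t : ℝ, z = a + t * b}

/-- The chordal (spherical) distance on ℂ ⊂ ℂ̂. -/
def chordal (w z : ℂ) : ℝ :=
  2 * dist w z / (Real.sqrt (1 + ‖w‖ ^ 2) * Real.sqrt (1 + ‖z‖ ^ 2))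

/-- A sequence of functions on the unit disk is a normal family with respect to the
spherical metric: every subsequence has a further subsequence converging locally
uniformly on the disk, either spherically to a function or uniformly to `∞` on compacta. -/
def SphNormalFamily (g : ℕ → ℂ → ℂ) : Prop :=
  ∀ s : ℕ → ℕ, ∃ t : ℕ → ℕ, StrictMono t ∧
    ((∃ h : ℂ → ℂ, ∀ K ⊆ unitDisk, IsCompact K → ∀ ε > 0,
        ∀ᶠ j in Filter.atTop, ∀ x ∈ K, chordal (g (s (t j)) x) (h x) < ε) ∨
      (∀ K ⊆ unitDisk, IsCompact K → ∀ C : ℝ,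
        ∀ᶠ j in Filter.atTop, ∀ x ∈ K, C ≤ ‖g (s (t j)) x‖))

/-!
For a disk `φ` through `z` with `φ'(0) = a ξ` the chain rule gives `(f ∘ φ)'(0) = a f_*(ξ)`, so
`χ(f(z), f_*(ξ)) = 2 · |(f ∘ φ)'(0)| / (1 + |f(z)|²) · 1/|a| ≤ 2C · 1/|a|`, and taking the infimum
over all such disks gives the bound by `2C k_M(z, ξ)`. Since `M` is open, small affine disks
`t ↦ z + t a ξ` show that this infimum is over a nonempty set, and constant disks show `C ≥ 0`.
-/

theorem analyticDiskIn_const {M : Set E} {z : E} (hz : z ∈ M) :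
    AnalyticDiskIn M (fun _ : ℂ => z) :=
  ⟨differentiableOn_const z, fun _ _ => hz⟩

theorem exists_affine_analyticDiskIn {M : Set E} (hM : IsOpen M) {z : E} (hz : z ∈ M) (ξ : E) :
    ∃ a : ℂ, a ≠ 0 ∧ AnalyticDiskIn M (fun t : ℂ => z + (t * a) • ξ) := by
  obtain ⟨ε, hε, hball⟩ := Metric.isOpen_iff.mp hM z hz
  have hξ : 0 < ‖ξ‖ + 1 := by positivity
  refine ⟨(ε / (‖ξ‖ + 1) : ℝ), by exact_mod_cast (div_pos hε hξ).ne', ?_, ?_⟩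
  · fun_prop
  · intro t ht
    apply hball
    have ht : ‖t‖ < 1 := by simpa [unitDisk] using ht
    have hε' : ε / (‖ξ‖ + 1) * ‖ξ‖ < ε := by
      rw [div_mul_eq_mul_div, div_lt_iff₀ hξ]; nlinarith
    calc dist (z + (t * (ε / (‖ξ‖ + 1) : ℝ)) • ξ) z
        = ‖t‖ * (ε / (‖ξ‖ + 1) * ‖ξ‖) := by
          rw [dist_eq_norm, add_sub_cancel_left, norm_smul, norm_mul, Complex.norm_real,
            Real.norm_of_nonneg (div_pos hε hξ).le, mul_assoc]
      _ ≤ 1 * (ε / (‖ξ‖ + 1) * ‖ξ‖) := by gcongr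
      _ < ε := by rwa [one_mul]

theorem deriv_affine_disk (z ξ : E) (a : ℂ) :
    deriv (fun t : ℂ => z + (t * a) • ξ) 0 = a • ξ := by
  have : HasDerivAt (fun t : ℂ => z + (t * a) • ξ) (a • ξ) 0 := by
    simpa using ((hasDerivAt_mul_const a).smul_const ξ).const_add z
  exact this.deriv

theorem AnalyticDiskIn.differentiableAt_zero {M : Set E} {φ : ℂ → E} (hφ : AnalyticDiskIn M φ) :
    DifferentiableAt ℂ φ 0 :=
  hφ.1.differentiableAt (Metric.isOpen_ball.mem_nhds (by simp))

theorem AnalyticDiskIn.center_mem {M : Set E} {φ : ℂ → E} (hφ : AnalyticDiskIn M φ) : φ 0 ∈ M :=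
  hφ.2 (by simp [unitDisk])

theorem sphMetric_fderiv_eq_of_deriv_eq_smul {f : E → ℂ} {φ : ℂ → E} {a : ℂ} {ξ : E}
    (hf : DifferentiableAt ℂ f (φ 0)) (hφ : DifferentiableAt ℂ φ 0) (hφ' : deriv φ 0 = a • ξ)
    (ha : a ≠ 0) :
    sphMetric (f (φ 0)) (fderiv ℂ f (φ 0) ξ) =
      2 * (‖deriv (f ∘ φ) 0‖ / (1 + ‖f (φ 0)‖ ^ 2)) * (1 / ‖a‖) := by
  rw [fderiv_comp_deriv 0 hf hφ, hφ', map_smul, norm_smul, sphMetric]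
  field_simp

theorem sph_deriv_bound_implies_normal_general (M : Set E) (hM : IsOpen M)
    (f : E → ℂ) (hf : DifferentiableOn ℂ f M)
    (C : ℝ)
    (hC : ∀ φ : ℂ → E, AnalyticDiskIn M φ →
      ‖deriv (f ∘ φ) 0‖ / (1 + ‖f (φ 0)‖ ^ 2) ≤ C) :
    ∀ z ∈ M, ∀ ξ : E,
      sphMetric (f z) (fderiv ℂ f z ξ) ≤ 2 * C * kobayashi M z ξ := by
  intro z hz ξ
  have hC0 : 0 ≤ C := by simpa [Function.comp_def] using hC _ (analyticDiskIn_const hz)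
  obtain ⟨a, ha, hdisk⟩ := exists_affine_analyticDiskIn hM hz ξ
  rw [kobayashi, ← smul_eq_mul, ← Real.sInf_smul_of_nonneg (by positivity)]
  refine le_csInf (Set.Nonempty.smul_set
    ⟨_, _, a, hdisk, by simp, deriv_affine_disk z ξ a, ha, rfl⟩) ?_
  rintro _ ⟨_, ⟨φ, b, hφ, rfl, hφ', hb, rfl⟩, rfl⟩
  rw [sphMetric_fderiv_eq_of_deriv_eq_smul (hf.differentiableAt (hM.mem_nhds hφ.center_mem))
    hφ.differentiableAt_zero hφ' hb]
  show _ ≤ 2 * C * _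
  gcongr
  exact hC φ hφ

/-- If the spherical derivative of `f ∘ φ` at `0` is bounded by `C` uniformly over all
analytic disks `φ` in a Kobayashi non-degenerate `M`, then `f` is normal with
constant `2C`. -/
theorem sph_deriv_bound_implies_normal (M : Set E) (hM : IsOpen M)
    (hk : KobayashiNondegenerate M) (f : E → ℂ) (hf : DifferentiableOn ℂ f M)
    (C : ℝ)
    (hC : ∀ φ : ℂ → E, AnalyticDiskIn M φ →
      ‖deriv (f ∘ φ) 0‖ / (1 + ‖f (φ 0)‖ ^ 2) ≤ C) :
    ∀ z ∈ M, ∀ ξ : E,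
      sphMetric (f z) (fderiv ℂ f z ξ) ≤ 2 * C * kobayashi M z ξ :=
  sph_deriv_bound_implies_normal_general M hM f hf C hC

end
end

section
/- Let M be infinitesimally Kobayashi non-degenerate and f : M → ℂ semi-Bloch. Then for each (real-affine) line L in ℂ, M_L := sup{ |f_*(z)(ξ)| / k_M(z,ξ) : z ∈ M, f(z) ∈ L, ξ ∈ T_z(M)∖{0} } < ∞. -/
open Metric Set Filter

noncomputable section

variable {E : Type*} [NormedAddCommGroup E] [NormedSpace ℂ E]

/-!
Rotating and translating the line `L = a + ℝ b` into `I / b * a + iℝ`, the function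
`exp (I / b * f)` has constant modulus `c` on `f⁻¹(L)`. There the spherical derivative
of `exp (λ f)` equals `2 c |λ| |f'| / (1 + c²)`, so its bound by the Kobayashi metric,
given by semi-Blochness, bounds `|f'|` by a fixed multiple of that metric.
-/

open Complex

theorem sphMetric_nonneg (w ξ : ℂ) : 0 ≤ sphMetric w ξ := by
  unfold sphMetric
  positivity

theorem norm_exp_div_mul_line (a b : ℂ) (hb : b ≠ 0) (t : ℝ) :
    ‖exp (I / b * (a + t * b))‖ = ‖exp (I / b * a)‖ := by
  have hsplit : I / b * (a + t * b) = I / b * a + t * I := by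
    field_simp
  rw [hsplit, exp_add, norm_mul, norm_exp_ofReal_mul_I, mul_one]

theorem sphMetric_fderiv_exp_const_mul {f : E → ℂ} {z : E} (hf : DifferentiableAt ℂ f z)
    (lam : ℂ) (ξ : E) :
    sphMetric (exp (lam * f z)) (fderiv ℂ (fun z => exp (lam * f z)) z ξ) =
      2 * ‖exp (lam * f z)‖ * ‖lam‖ * ‖fderiv ℂ f z ξ‖ / (1 + ‖exp (lam * f z)‖ ^ 2) := by
  have hderiv : HasFDerivAt (fun z => exp (lam * f z))
      (exp (lam * f z) • lam • fderiv ℂ f z) z :=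
    (hasDerivAt_exp (lam * f z)).comp_hasFDerivAt z (hf.hasFDerivAt.const_mul lam)
  simp only [hderiv.fderiv, sphMetric, smul_apply, norm_smul, mul_assoc]

theorem norm_fderiv_le_of_sphMetric_exp_const_mul_le {f : E → ℂ} {z : E} {lam : ℂ}
    (hlam : lam ≠ 0) {ξ : E} {y : ℝ}
    (h : sphMetric (exp (lam * f z)) (fderiv ℂ (fun z => exp (lam * f z)) z ξ) ≤ y) :
    ‖fderiv ℂ f z ξ‖ ≤ (1 + ‖exp (lam * f z)‖ ^ 2) / (2 * ‖exp (lam * f z)‖ * ‖lam‖) * y := by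
  set c := ‖exp (lam * f z)‖
  have hc : 0 < c := norm_pos_iff.mpr (exp_ne_zero _)
  have hfactor : 0 < 2 * c * ‖lam‖ := by positivity
  by_cases hf : DifferentiableAt ℂ f z
  · rw [sphMetric_fderiv_exp_const_mul hf, div_le_iff₀ (by positivity)] at h
    rw [div_mul_eq_mul_div, le_div_iff₀ hfactor]
    linarith
  · rw [fderiv_zero_of_not_differentiableAt hf, zero_apply, norm_zero]
    have hy : 0 ≤ y := (sphMetric_nonneg _ _).trans h
    positivity

theorem semiBloch_line_bound_general (M : Set E) (f : E → ℂ)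
    (hsb : SemiBloch M f) :
    ∀ L : Set ℂ, IsLine L → ∃ C : ℝ, ∀ z ∈ M, f z ∈ L → ∀ ξ : E,
      ‖fderiv ℂ f z ξ‖ ≤ C * kobayashi M z ξ := by
  rintro L ⟨a, b, hb, rfl⟩
  have hlam : I / b ≠ 0 := div_ne_zero I_ne_zero hb
  obtain ⟨C, hC⟩ := hsb (I / b)
  set c := ‖exp (I / b * a)‖
  refine ⟨(1 + c ^ 2) / (2 * c * ‖I / b‖) * C, ?_⟩
  rintro z hz ⟨t, ht⟩ ξ
  have hmod : ‖exp (I / b * f z)‖ = c := by rw [ht, norm_exp_div_mul_line a b hb t]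
  have := norm_fderiv_le_of_sphMetric_exp_const_mul_le hlam (hC z hz ξ)
  rwa [hmod, ← mul_assoc] at this

/-- If `f` is semi-Bloch on a Kobayashi non-degenerate `M`, then for each line `L`,
`M_L = sup { |f_*(z) ξ| / k_M(z,ξ) : f z ∈ L } < ∞`. -/
theorem semiBloch_line_bound (M : Set E) (hM : IsOpen M)
    (hk : KobayashiNondegenerate M) (f : E → ℂ) (hf : DifferentiableOn ℂ f M)
    (hsb : SemiBloch M f) :
    ∀ L : Set ℂ, IsLine L → ∃ C : ℝ, ∀ z ∈ M, f z ∈ L → ∀ ξ : E,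
      ‖fderiv ℂ f z ξ‖ ≤ C * kobayashi M z ξ :=
  semiBloch_line_bound_general M f hsb

end
end

section
/- Let M be infinitesimally Kobayashi non-degenerate and f : M → ℂ holomorphic. If for each line L ⊂ ℂ the quantity M_L = sup{ |f_*(z)(ξ)|/k_M(z,ξ) : f(z) ∈ L, ξ ≠ 0 } is finite, then f is semi-Bloch, i.e., exp(λ f) is normal for every λ ∈ ℂ. -/
open Metric Set Filter

noncomputable section

variable {E : Type*} [NormedAddCommGroup E] [NormedSpace ℂ E]

/-! Fix `λ` and put `h = λ f`, so that the spherical derivative of `exp h` is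
`|h_* ξ| / cosh (Re h)`. The level sets `Re h = c` are lines, so Baire's theorem yields one `N`
for which the levels `c` with `|h_*| ≤ N k_M` on `{Re h = c}` are dense in an interval `[a, b]`.
For an analytic disk `φ` and `F = h ∘ φ` this gives `|F'| ≤ 2N` on `{|ζ| < 1/2, Re F ∈ [a, b]}`,
by the open mapping theorem and continuity of `F'`. If `Re F(0) ≥ b`, then `Re F` cannot cross the
strip `[a, b]` with bounded speed, so `Re F ≥ a` on a disk of fixed radius, and Schwarz's lemma
for `exp (a - F)` bounds `|F'(0)|` by a multiple of `exp (Re F(0))`; symmetrically below the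
strip. Hence `|F'(0)| ≤ K cosh (Re F(0))` uniformly in `φ`, which is the normality of `exp h`. -/

open Topology Complex

theorem exists_Icc_subset_closure_of_forall_exists_nat {P : ℕ → ℝ → Prop}
    (h : ∀ c, ∃ n, P n c) : ∃ n a b, a < b ∧ Icc a b ⊆ closure {c | P n c} := by
  obtain ⟨n, c, hc⟩ := nonempty_interior_of_iUnion_of_closed (fun n => isClosed_closure)
    (eq_univ_of_forall fun c => mem_iUnion.2 ((h c).imp fun n hn => subset_closure hn))
  obtain ⟨ε, hε, hball⟩ := Metric.mem_nhds_iff.1 (mem_interior_iff_mem_nhds.1 hc)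
  refine ⟨n, c - ε / 2, c + ε / 2, by linarith, ?_⟩
  rw [← Real.closedBall_eq_Icc]
  exact (closedBall_subset_ball (half_lt_self hε)).trans hball

theorem le_of_abs_deriv_le_on_strip {ψ ψ' : ℝ → ℝ} {a b L : ℝ}
    (hψ : ∀ t ∈ Icc (0 : ℝ) 1, HasDerivAt ψ (ψ' t) t) (hL₀ : 0 ≤ L) (hL : L < b - a)
    (h₀ : b ≤ ψ 0) (hstrip : ∀ t ∈ Ico (0 : ℝ) 1, ψ t ∈ Icc a b → |ψ' t| ≤ L) :
    a ≤ ψ 1 := by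
  -- `-ψ` stays below the line from `-b` to `-a`: where it touches it, `ψ` is in the strip and
  -- moves slower than the line.
  have fence := image_le_of_deriv_right_lt_deriv_boundary (f := fun t => -ψ t)
    (f' := fun t => -ψ' t) (B := fun t => (b - a) * t - b) (B' := fun _ => b - a)
    (fun t ht => (hψ t ht).continuousAt.neg.continuousWithinAt)
    (fun t ht => (hψ t (Ico_subset_Icc_self ht)).neg.hasDerivWithinAt)
    (by simpa using h₀)
    (fun t => by simpa using ((hasDerivAt_id t).const_mul (b - a)).sub_const b)
    (fun t ht heq => by
      have hmem : ψ t ∈ Icc a b := ⟨by nlinarith [ht.2], by nlinarith [ht.1]⟩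
      linarith [neg_abs_le (ψ' t), hstrip t ht hmem])
    (right_mem_Icc.2 zero_le_one)
  linarith

theorem le_re_of_norm_deriv_le_on_strip {F : ℂ → ℂ} {R a b N d : ℝ} (hN : 0 ≤ N) (hdR : d ≤ R)
    (hNd : N * d < b - a) (hF : DifferentiableOn ℂ F (ball 0 R))
    (hstrip : ∀ ζ ∈ ball (0 : ℂ) R, (F ζ).re ∈ Icc a b → ‖deriv F ζ‖ ≤ N)
    (h₀ : b ≤ (F 0).re) {x : ℂ} (hx : x ∈ ball (0 : ℂ) d) : a ≤ (F x).re := by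
  have hxd : ‖x‖ < d := mem_ball_zero_iff.1 hx
  have hseg : ∀ t ∈ Icc (0 : ℝ) 1, (t : ℂ) * x ∈ ball (0 : ℂ) R := fun t ht => by
    rw [mem_ball_zero_iff, norm_mul, norm_real, Real.norm_of_nonneg ht.1]
    nlinarith [norm_nonneg x, ht.2]
  have hderiv : ∀ t ∈ Icc (0 : ℝ) 1,
      HasDerivAt (fun s : ℝ => (F (s * x)).re) (deriv F (t * x) * x).re t := fun t ht => by
    have hline : HasDerivAt (fun w : ℂ => F (w * x)) (deriv F (t * x) * x) t :=
      (hF.differentiableAt (isOpen_ball.mem_nhds (hseg t ht))).hasDerivAt.comp (t : ℂ)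
        (by simpa using (hasDerivAt_id (t : ℂ)).mul_const x)
    exact hline.real_of_complex
  have hspeed : N * ‖x‖ < b - a := (mul_le_mul_of_nonneg_left hxd.le hN).trans_lt hNd
  simpa using le_of_abs_deriv_le_on_strip hderiv (by positivity) hspeed (by simpa using h₀)
    fun t ht hmem => calc
      |(deriv F (t * x) * x).re| ≤ ‖deriv F (t * x)‖ * ‖x‖ :=
        (abs_re_le_norm _).trans_eq (norm_mul _ _)
      _ ≤ N * ‖x‖ := by gcongr; exact hstrip _ (hseg t (Ico_subset_Icc_self ht)) hmem

theorem norm_deriv_le_of_le_re {F : ℂ → ℂ} {d τ : ℝ} (hd : 0 < d)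
    (hF : DifferentiableOn ℂ F (ball 0 d)) (hτ : ∀ x ∈ ball (0 : ℂ) d, τ ≤ (F x).re) :
    ‖deriv F 0‖ ≤ 2 / d * Real.exp ((F 0).re - τ) := by
  set G : ℂ → ℂ := fun x => cexp (τ - F x)
  have hG : ∀ x ∈ ball (0 : ℂ) d, ‖G x‖ ≤ 1 := fun x hx => by
    simpa [G, norm_exp] using hτ x hx
  have hmaps : MapsTo G (ball 0 d) (closedBall (G 0) 2) := fun x hx => by
    rw [mem_closedBall, dist_eq_norm]
    linarith [norm_sub_le (G x) (G 0), hG x hx, hG 0 (mem_ball_self hd)]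
  have hschwarz := norm_deriv_le_div_of_mapsTo_ball (hF.const_sub _).cexp hmaps hd
  have hF₀ := (hF.differentiableAt (ball_mem_nhds 0 hd)).hasDerivAt
  rw [((hF₀.const_sub (τ : ℂ)).cexp).deriv, norm_mul, norm_neg, norm_exp] at hschwarz
  calc ‖deriv F 0‖
      = Real.exp ((F 0).re - τ) * (Real.exp ((τ : ℂ) - F 0).re * ‖deriv F 0‖) := by
        rw [← mul_assoc, ← Real.exp_add]; simp
    _ ≤ Real.exp ((F 0).re - τ) * (2 / d) := by gcongr
    _ = 2 / d * Real.exp ((F 0).re - τ) := mul_comm _ _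

theorem norm_deriv_le_exp_of_le_re_of_norm_deriv_le_on_strip {F : ℂ → ℂ} {R a b N d : ℝ}
    (hN : 0 ≤ N) (hd : 0 < d) (hdR : d ≤ R) (hNd : N * d < b - a)
    (hF : DifferentiableOn ℂ F (ball 0 R))
    (hstrip : ∀ ζ ∈ ball (0 : ℂ) R, (F ζ).re ∈ Icc a b → ‖deriv F ζ‖ ≤ N)
    (h₀ : b ≤ (F 0).re) :
    ‖deriv F 0‖ ≤ 2 / d * Real.exp (-a) * Real.exp (F 0).re := by
  rw [mul_assoc, ← Real.exp_add, neg_add_eq_sub]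
  exact norm_deriv_le_of_le_re hd (hF.mono (ball_subset_ball hdR))
    fun _ hx => le_re_of_norm_deriv_le_on_strip hN hdR hNd hF hstrip h₀ hx

theorem exists_norm_deriv_le_mul_cosh_of_norm_deriv_le_on_strip {R a b N : ℝ} (hR : 0 < R)
    (hab : a < b) (hN : 0 ≤ N) :
    ∃ K > 0, ∀ F : ℂ → ℂ, DifferentiableOn ℂ F (ball 0 R) →
      (∀ ζ ∈ ball (0 : ℂ) R, (F ζ).re ∈ Icc a b → ‖deriv F ζ‖ ≤ N) →
      ‖deriv F 0‖ ≤ K * Real.cosh (F 0).re := by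
  set d := min R ((b - a) / (N + 1))
  have hd : 0 < d := lt_min hR (div_pos (sub_pos.2 hab) (by linarith))
  have hdR : d ≤ R := min_le_left _ _
  have hNd : N * d < b - a := calc
    N * d ≤ N * ((b - a) / (N + 1)) := by gcongr; exact min_le_right _ _
    _ < b - a := by rw [mul_div_assoc', div_lt_iff₀ (by linarith)]; nlinarith
  set K := N + 4 / d * (Real.exp (-a) + Real.exp b)
  have h4d : 0 < 4 / d := by positivity
  have hNK : N ≤ K := le_add_of_nonneg_right (by positivity)
  have haK : 4 / d * Real.exp (-a) ≤ K := by nlinarith [Real.exp_pos b]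
  have hbK : 4 / d * Real.exp b ≤ K := by nlinarith [Real.exp_pos (-a)]
  refine ⟨K, by positivity, fun F hF hstrip => ?_⟩
  set u := (F 0).re
  have hcosh : 1 ≤ Real.cosh u := Real.one_le_cosh u
  have hexp : Real.exp u ≤ 2 * Real.cosh u := by
    rw [Real.cosh_eq]; linarith [Real.exp_pos (-u)]
  have hexp_neg : Real.exp (-u) ≤ 2 * Real.cosh u := by
    rw [Real.cosh_eq]; linarith [Real.exp_pos u]
  rcases le_or_gt b u with hbu | hub
  · calc ‖deriv F 0‖ ≤ 2 / d * Real.exp (-a) * Real.exp u :=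
          norm_deriv_le_exp_of_le_re_of_norm_deriv_le_on_strip hN hd hdR hNd hF hstrip hbu
      _ ≤ 2 / d * Real.exp (-a) * (2 * Real.cosh u) := by gcongr
      _ = 4 / d * Real.exp (-a) * Real.cosh u := by ring
      _ ≤ K * Real.cosh u := by gcongr
  rcases le_or_gt u a with hua | hau
  · have hreflect := norm_deriv_le_exp_of_le_re_of_norm_deriv_le_on_strip (F := -F) (a := -b)
      (b := -a) hN hd hdR (by linarith) hF.neg
      (fun ζ hζ hmem => by
        rw [deriv.neg, norm_neg]
        exact hstrip ζ hζ ⟨by simpa using hmem.2, by simpa using hmem.1⟩)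
      (by simpa using hua)
    rw [deriv.neg, norm_neg, neg_neg] at hreflect
    calc ‖deriv F 0‖ ≤ 2 / d * Real.exp b * Real.exp (-u) := by simpa using hreflect
      _ ≤ 2 / d * Real.exp b * (2 * Real.cosh u) := by gcongr
      _ = 4 / d * Real.exp b * Real.cosh u := by ring
      _ ≤ K * Real.cosh u := by gcongr
  · calc ‖deriv F 0‖ ≤ N := hstrip 0 (mem_ball_self hR) ⟨hau.le, hub.le⟩
      _ ≤ K * Real.cosh u := by nlinarith

theorem norm_deriv_le_of_re_mem_closure {F : ℂ → ℂ} {U : Set ℂ} {S : Set ℝ} {B : ℝ}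
    (hU : IsOpen U) (hF : DifferentiableOn ℂ F U) (hB : 0 ≤ B)
    (hS : ∀ ζ ∈ U, (F ζ).re ∈ S → ‖deriv F ζ‖ ≤ B) {ζ : ℂ} (hζ : ζ ∈ U)
    (hζS : (F ζ).re ∈ closure S) : ‖deriv F ζ‖ ≤ B := by
  have hFζ : AnalyticAt ℂ F ζ := hF.analyticAt (hU.mem_nhds hζ)
  rcases hFζ.eventually_constant_or_nhds_le_map_nhds with hconst | hopen
  · rwa [Filter.EventuallyEq.deriv_eq (f := fun _ => F ζ) hconst, deriv_const, norm_zero]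
  have hre_open : 𝓝 (F ζ).re ≤ map (fun w => (F w).re) (𝓝 ζ) :=
    (isOpenMap_re.nhds_le (F ζ)).trans ((map_mono hopen).trans_eq map_map)
  have hfreq : ∃ᶠ w in 𝓝 ζ, ‖deriv F w‖ ≤ B :=
    ((frequently_map.1 ((mem_closure_iff_frequently.1 hζS).filter_mono hre_open)).and_eventually
      (hU.mem_nhds hζ)).mono fun w hw => hS w hw.2 hw.1
  exact (isClosed_le continuous_norm continuous_const).mem_of_frequently_of_tendsto hfreq
    hFζ.deriv.continuousAt.tendsto

theorem kobayashi_nonneg (M : Set E) (z ξ : E) : 0 ≤ kobayashi M z ξ :=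
  Real.sInf_nonneg <| by
    rintro r ⟨φ, a, -, -, -, -, rfl⟩
    positivity

theorem kobayashi_le_one_div_norm {M : Set E} {z ξ : E} {φ : ℂ → E} {a : ℂ}
    (hφ : AnalyticDiskIn M φ) (h₀ : φ 0 = z) (hd : deriv φ 0 = a • ξ) (ha : a ≠ 0) :
    kobayashi M z ξ ≤ 1 / ‖a‖ :=
  csInf_le ⟨0, by rintro r ⟨ψ, b, -, -, -, -, rfl⟩; positivity⟩ ⟨φ, a, hφ, h₀, hd, ha, rfl⟩

theorem kobayashi_deriv_le_inv {M : Set E} {φ : ℂ → E} (hφ : AnalyticDiskIn M φ) {ζ : ℂ} {r : ℝ}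
    (hr : 0 < r) (hζr : ‖ζ‖ + r ≤ 1) : kobayashi M (φ ζ) (deriv φ ζ) ≤ r⁻¹ := by
  have hsub : ∀ t ∈ unitDisk, ζ + r * t ∈ unitDisk := fun t ht => by
    have ht : ‖t‖ < 1 := mem_ball_zero_iff.1 ht
    rw [unitDisk, mem_ball_zero_iff]
    calc ‖ζ + r * t‖ ≤ ‖ζ‖ + r * ‖t‖ := by
          simpa [norm_mul, abs_of_pos hr] using norm_add_le ζ (r * t)
      _ < ‖ζ‖ + r := by gcongr; simpa using mul_lt_mul_of_pos_left ht hr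
      _ ≤ 1 := hζr
  have haff : ∀ t : ℂ, HasDerivAt (fun s : ℂ => ζ + r * s) (r : ℂ) t := fun t => by
    simpa using ((hasDerivAt_id t).const_mul (r : ℂ)).const_add ζ
  have hζ : ζ ∈ unitDisk := by simpa using hsub 0 (mem_ball_self one_pos)
  have hφζ : HasDerivAt φ (deriv φ ζ) ζ :=
    (hφ.1.differentiableAt (isOpen_ball.mem_nhds hζ)).hasDerivAt
  have hrescale : AnalyticDiskIn M (fun t => φ (ζ + r * t)) :=
    ⟨fun t ht => ((hφ.1.differentiableAt (isOpen_ball.mem_nhds (hsub t ht))).comp t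
      (haff t).differentiableAt).differentiableWithinAt, fun t ht => hφ.2 (hsub t ht)⟩
  simpa [abs_of_pos hr] using kobayashi_le_one_div_norm hrescale (by simp)
    (HasDerivAt.scomp_of_eq (hg := hφζ) (hh := haff 0) (hy := by simp)).deriv
    (ofReal_ne_zero.2 hr.ne')

theorem exists_analyticDiskIn {M : Set E} (hM : IsOpen M) {z : E} (hz : z ∈ M) (ξ : E) :
    ∃ (φ : ℂ → E) (a : ℂ), AnalyticDiskIn M φ ∧ φ 0 = z ∧ deriv φ 0 = a • ξ ∧ a ≠ 0 := by
  obtain ⟨ε, hε, hball⟩ := Metric.isOpen_iff.1 hM z hz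
  set r : ℝ := ε / (‖ξ‖ + 1)
  have hr : 0 < r := by positivity
  have hlin : ∀ t : ℂ, HasDerivAt (fun s : ℂ => z + (r * s) • ξ) ((r : ℂ) • ξ) t := fun t => by
    simpa using (((hasDerivAt_id t).const_mul (r : ℂ)).smul_const ξ).const_add z
  refine ⟨fun s => z + (r * s) • ξ, r, ⟨fun t _ => (hlin t).differentiableAt.differentiableWithinAt,
    fun t ht => hball ?_⟩, by simp, (hlin 0).deriv, ofReal_ne_zero.2 hr.ne'⟩
  have ht : ‖t‖ < 1 := mem_ball_zero_iff.1 ht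
  rw [mem_ball, dist_eq_norm, add_sub_cancel_left, norm_smul, norm_mul, norm_real,
    Real.norm_of_nonneg hr.le]
  calc r * ‖t‖ * ‖ξ‖ ≤ r * ‖ξ‖ := by
        have := mul_le_mul_of_nonneg_right ht.le (norm_nonneg ξ); nlinarith
    _ < r * (‖ξ‖ + 1) := by gcongr; linarith
    _ = ε := div_mul_cancel₀ _ (by positivity)

theorem le_mul_kobayashi {M : Set E} (hM : IsOpen M) {z : E} (hz : z ∈ M) {ξ : E} {x C : ℝ}
    (hC : 0 < C) (h : ∀ (φ : ℂ → E) (a : ℂ), AnalyticDiskIn M φ → φ 0 = z → deriv φ 0 = a • ξ →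
      a ≠ 0 → ‖a‖ * x ≤ C) :
    x ≤ C * kobayashi M z ξ := by
  obtain ⟨φ, a, hφ, h₀, hd, ha⟩ := exists_analyticDiskIn hM hz ξ
  rw [← div_le_iff₀' hC]
  refine le_csInf ⟨_, φ, a, hφ, h₀, hd, ha, rfl⟩ ?_
  rintro r ⟨ψ, b, hψ, h₀, hd, hb, rfl⟩
  rw [div_le_iff₀ hC, one_div, inv_mul_eq_div, le_div_iff₀ (norm_pos_iff.2 hb)]
  linarith [h ψ b hψ h₀ hd hb]

theorem AnalyticDiskIn.hasDerivAt_comp {M : Set E} (hM : IsOpen M) {h : E → ℂ}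
    (hh : DifferentiableOn ℂ h M) {φ : ℂ → E} (hφ : AnalyticDiskIn M φ) {ζ : ℂ}
    (hζ : ζ ∈ unitDisk) : HasDerivAt (h ∘ φ) (fderiv ℂ h (φ ζ) (deriv φ ζ)) ζ :=
  (hh.differentiableAt (hM.mem_nhds (hφ.2 hζ))).hasFDerivAt.comp_hasDerivAt ζ
    (hφ.1.differentiableAt (isOpen_ball.mem_nhds hζ)).hasDerivAt

def blochLevels (M : Set E) (h : E → ℂ) (N : ℝ) : Set ℝ :=
  {c | ∀ z ∈ M, (h z).re = c → ∀ ξ, ‖fderiv ℂ h z ξ‖ ≤ N * kobayashi M z ξ}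

theorem AnalyticDiskIn.norm_deriv_comp_le {M : Set E} (hM : IsOpen M) {h : E → ℂ}
    (hh : DifferentiableOn ℂ h M) {φ : ℂ → E} (hφ : AnalyticDiskIn M φ) {N : ℝ} (hN : 0 ≤ N)
    {ζ : ℂ} (hζ : ζ ∈ ball (0 : ℂ) (1 / 2)) (hζN : (h (φ ζ)).re ∈ closure (blochLevels M h N)) :
    ‖deriv (h ∘ φ) ζ‖ ≤ 2 * N := by
  have hsub : ball (0 : ℂ) (1 / 2) ⊆ unitDisk := ball_subset_ball (by norm_num)
  refine norm_deriv_le_of_re_mem_closure isOpen_ball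
    (fun w hw => (hφ.hasDerivAt_comp hM hh (hsub hw)).differentiableAt.differentiableWithinAt)
    (by positivity) (fun w hw hwN => ?_) hζ hζN
  have hw' : ‖w‖ + 1 / 2 ≤ 1 := by linarith [mem_ball_zero_iff.1 hw]
  rw [(hφ.hasDerivAt_comp hM hh (hsub hw)).deriv]
  calc ‖fderiv ℂ h (φ w) (deriv φ w)‖ ≤ N * kobayashi M (φ w) (deriv φ w) :=
        hwN _ (hφ.2 (hsub hw)) rfl _
    _ ≤ N * 2 := by gcongr; simpa using kobayashi_deriv_le_inv hφ one_half_pos hw'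
    _ = 2 * N := mul_comm _ _

theorem sphMetric_cexp_mul (w v : ℂ) : sphMetric (cexp w) (cexp w * v) = ‖v‖ / Real.cosh w.re := by
  rw [sphMetric, norm_mul, norm_exp, Real.cosh_eq, Real.exp_neg]
  have := Real.exp_pos w.re
  field_simp
  ring

theorem normalOn_cexp_of_re_level_bounds {M : Set E} (hM : IsOpen M) {h : E → ℂ}
    (hh : DifferentiableOn ℂ h M)
    (hlevel : ∀ c : ℝ, ∃ C : ℝ, ∀ z ∈ M, (h z).re = c → ∀ ξ,
      ‖fderiv ℂ h z ξ‖ ≤ C * kobayashi M z ξ) :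
    NormalOn M (fun z => cexp (h z)) := by
  obtain ⟨N, a, b, hab, hstrip⟩ := exists_Icc_subset_closure_of_forall_exists_nat
    (P := fun (N : ℕ) c => c ∈ blochLevels M h N)
    fun c => (hlevel c).imp' (fun C => ⌈C⌉₊) fun C hC z hz hzc ξ =>
      (hC z hz hzc ξ).trans (by gcongr; exacts [kobayashi_nonneg M z ξ, Nat.le_ceil C])
  obtain ⟨K, hK, hdisk⟩ := exists_norm_deriv_le_mul_cosh_of_norm_deriv_le_on_strip
    (R := 1 / 2) (N := 2 * N) one_half_pos hab (by positivity)
  refine ⟨K, fun z hz ξ => ?_⟩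
  have hz' := (hh.differentiableAt (hM.mem_nhds hz)).hasFDerivAt
  rw [hz'.cexp.fderiv, smul_apply, smul_eq_mul, sphMetric_cexp_mul,
    div_le_iff₀ (Real.cosh_pos _), mul_right_comm]
  refine le_mul_kobayashi hM hz (by positivity) fun φ c hφ h₀ hd hc => ?_
  have hφ0 : (0 : ℂ) ∈ unitDisk := mem_ball_self one_pos
  have hbound := hdisk (h ∘ φ)
    (fun w hw => (hφ.hasDerivAt_comp hM hh
      (ball_subset_ball (by norm_num) hw)).differentiableAt.differentiableWithinAt)
    fun ζ hζ hζS => hφ.norm_deriv_comp_le hM hh (by positivity) hζ (hstrip hζS)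
  rwa [(hφ.hasDerivAt_comp hM hh hφ0).deriv, h₀, hd, map_smul, norm_smul, Function.comp_apply,
    h₀] at hbound

theorem isLine_setOf_re_mul_eq {lam : ℂ} (hlam : lam ≠ 0) (c : ℝ) :
    IsLine {w : ℂ | (lam * w).re = c} := by
  refine ⟨c / lam, I / lam, div_ne_zero I_ne_zero hlam,
    Set.ext fun w => ⟨fun (hw : (lam * w).re = c) => ?_, ?_⟩⟩
  · refine ⟨(lam * w).im, ?_⟩
    field_simp
    apply Complex.ext <;> simp [← hw, mul_comm]
  · rintro ⟨t, rfl⟩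
    show (lam * (c / lam + t * (I / lam))).re = c
    rw [show lam * (c / lam + t * (I / lam)) = c + t * I by field_simp]
    simp

theorem line_bound_implies_semiBloch_general (M : Set E) (hM : IsOpen M)
    (f : E → ℂ) (hf : DifferentiableOn ℂ f M)
    (hL : ∀ L : Set ℂ, IsLine L → ∃ C : ℝ, ∀ z ∈ M, f z ∈ L → ∀ ξ : E,
      ‖fderiv ℂ f z ξ‖ ≤ C * kobayashi M z ξ) :
    SemiBloch M f := by
  intro lam
  refine normalOn_cexp_of_re_level_bounds hM (hf.const_mul lam) fun c => ?_
  have hderiv : ∀ z ∈ M, ∀ ξ,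
      ‖fderiv ℂ (fun z => lam * f z) z ξ‖ = ‖lam‖ * ‖fderiv ℂ f z ξ‖ := fun z hz ξ => by
    rw [fderiv_const_mul (hf.differentiableAt (hM.mem_nhds hz)), smul_apply,
      smul_eq_mul, norm_mul]
  rcases eq_or_ne lam 0 with rfl | hlam
  · exact ⟨0, fun z hz _ ξ => by simp⟩
  obtain ⟨C, hC⟩ := hL _ (isLine_setOf_re_mul_eq hlam c)
  refine ⟨‖lam‖ * C, fun z hz hzc ξ => ?_⟩
  rw [hderiv z hz ξ, mul_assoc]
  exact mul_le_mul_of_nonneg_left (hC z hz hzc ξ) (norm_nonneg lam)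

/-- If `M_L < ∞` for every line `L`, then `f` is semi-Bloch. -/
theorem line_bound_implies_semiBloch (M : Set E) (hM : IsOpen M)
    (hk : KobayashiNondegenerate M) (f : E → ℂ) (hf : DifferentiableOn ℂ f M)
    (hL : ∀ L : Set ℂ, IsLine L → ∃ C : ℝ, ∀ z ∈ M, f z ∈ L → ∀ ξ : E,
      ‖fderiv ℂ f z ξ‖ ≤ C * kobayashi M z ξ) :
    SemiBloch M f :=
  line_bound_implies_semiBloch_general M hM f hf hL

end
end
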